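/- Let f:D→ℝ be strongly tree-submodular, and let x∈D satisfy f(x) = min{ f(y) : y ∈ INWARD(x) }. If x' is a minimizer of f over OUTWARD(x), then f(x') = min{ f(y) : y ∈ INWARD(x') }. (Each outward steepest-descent step preserves inward local optimality.) -/

import Mathlib

/-- A finite rooted tree on vertex set `V`, encoded by its root, the parent function
(with `parent root = root`) and the depth function (distance to the root). -/
structure RTree (V : Type*) where
  root : V
  parent : V → V
  depth : V → ℕ
  parent_root : parent root = root
  depth_root : depth root = 0
  depth_parent : ∀ v, v ≠ root → depth (parent v) + 1 = depth v

namespace RTree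

variable {V : Type*} (T : RTree V)

/-- `a ⪯ b` : `a` is an ancestor of `b`, i.e. `a` lies on the path from `b` to the root. -/
def anc (a b : V) : Prop := ∃ k : ℕ, T.parent^[k] b = a

theorem iterate_depth_aux : ∀ (n : ℕ) (v : V), T.depth v = n → T.parent^[n] v = T.root := by
  intro n
  induction n with
  | zero =>
    intro v hn
    by_cases hv : v = T.root
    · simp [hv]
    · have := T.depth_parent v hv; omega
  | succ n ih =>
    intro v hn
    have hv : v ≠ T.root := by
      intro h; rw [h, T.depth_root] at hn; omega
    have h := T.depth_parent v hv
    rw [Function.iterate_succ_apply]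
    exact ih (T.parent v) (by omega)

theorem iterate_depth (v : V) : T.parent^[T.depth v] v = T.root :=
  T.iterate_depth_aux (T.depth v) v rfl

theorem anc_root (b : V) : T.anc T.root b := ⟨T.depth b, T.iterate_depth b⟩

theorem exists_lcaIndex (a b : V) : ∃ k : ℕ, T.anc (T.parent^[k] a) b :=
  ⟨T.depth a, by rw [T.iterate_depth a]; exact T.anc_root b⟩

open Classical in
/-- The highest common ancestor of `a` and `b` : the deepest vertex that is an ancestor
of both `a` and `b` (i.e. the unique vertex of the path `P[a→b]` that is an ancestor of both). -/
noncomputable def lca (a b : V) : V := T.parent^[Nat.find (T.exists_lcaIndex a b)] a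

/-- `ρ(a,b)` : the number of edges of the unique path `P[a→b]` from `a` to `b`. -/
noncomputable def dist (a b : V) : ℕ :=
  (T.depth a - T.depth (T.lca a b)) + (T.depth b - T.depth (T.lca a b))

open Classical in
/-- `P[a→b, d]` : the `d`-th vertex of the path from `a` to `b` (first the ascending part
from `a` to the highest common ancestor, then the descending part towards `b`);
by convention it equals `b` for `d > ρ(a,b)`. -/
noncomputable def pathVertex (a b : V) (d : ℕ) : V :=
  if T.dist a b ≤ d then b
  else if d ≤ T.depth a - T.depth (T.lca a b) then T.parent^[d] a
  else T.parent^[T.dist a b - d] b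

open Classical in
/-- `a ⊓ b` : the member of `{P[a→b,⌊ρ(a,b)/2⌋], P[a→b,⌈ρ(a,b)/2⌉]}` that is an
ancestor of the other one. -/
noncomputable def cap (a b : V) : V :=
  if T.anc (T.pathVertex a b (T.dist a b / 2)) (T.pathVertex a b ((T.dist a b + 1) / 2))
  then T.pathVertex a b (T.dist a b / 2)
  else T.pathVertex a b ((T.dist a b + 1) / 2)

open Classical in
/-- `a ⊔ b` : the member of `{P[a→b,⌊ρ(a,b)/2⌋], P[a→b,⌈ρ(a,b)/2⌉]}` that is a
descendant of the other one. -/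
noncomputable def cup (a b : V) : V :=
  if T.anc (T.pathVertex a b (T.dist a b / 2)) (T.pathVertex a b ((T.dist a b + 1) / 2))
  then T.pathVertex a b ((T.dist a b + 1) / 2)
  else T.pathVertex a b (T.dist a b / 2)

/-- `a ∧ b` : the highest common ancestor of `a` and `b`. -/
noncomputable def meet (a b : V) : V := T.lca a b

/-- `a ∨ b` : the unique vertex of `P[a→b]` with `ρ(a, a∨b) = ρ(a∧b, b)`. -/
noncomputable def join (a b : V) : V :=
  T.pathVertex a b (T.depth b - T.depth (T.lca a b))

/-- `a ↑^d b = P[a→b,d] ∧ b`. -/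
noncomputable def up (d : ℕ) (a b : V) : V := T.meet (T.pathVertex a b d) b

/-- `a ↓_d b = P[a→b, ρ(a ↑^d b, b)]`. -/
noncomputable def down (d : ℕ) (a b : V) : V :=
  T.pathVertex a b (T.dist (T.up d a b) b)

end RTree

section Product

variable {ι : Type*} {V : ι → Type*}

/-- `f` is strongly tree-submodular w.r.t. the trees `T i`:
`f(x) + f(y) ≥ f(x ⊓ y) + f(x ⊔ y)`, the operations acting componentwise. -/
def StronglyTreeSubmodular (T : ∀ i, RTree (V i)) (f : (∀ i, V i) → ℝ) : Prop :=
  ∀ x y : ∀ i, V i,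
    f (fun i => (T i).cap (x i) (y i)) + f (fun i => (T i).cup (x i) (y i)) ≤ f x + f y

/-- `INWARD(x) = { y ∈ NEIB(x) : y ⪯ x }`, where `NEIB(x) = {y : max_i ρ(x_i,y_i) ≤ 1}`. -/
def inward (T : ∀ i, RTree (V i)) (x : ∀ i, V i) : Set (∀ i, V i) :=
  {y | (∀ i, (T i).dist (x i) (y i) ≤ 1) ∧ ∀ i, (T i).anc (y i) (x i)}

/-- `OUTWARD(x) = { y ∈ NEIB(x) : x ⪯ y }`. -/
def outward (T : ∀ i, RTree (V i)) (x : ∀ i, V i) : Set (∀ i, V i) :=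
  {y | (∀ i, (T i).dist (x i) (y i) ≤ 1) ∧ ∀ i, (T i).anc (x i) (y i)}

end Product

/-!
If `y ∈ INWARD(x')` and `x' ∈ OUTWARD(x)`, then in every tree both `y i` and `x i` are `x' i`
or its parent. For such pairs `y ⊓ x` is `x` or one step above it and `y ⊔ x` is `x` or one step
below it, i.e. `y ⊓ x ∈ INWARD(x)` and `y ⊔ x ∈ OUTWARD(x)`. Hence
`f x + f x' ≤ f (y ⊓ x) + f (y ⊔ x) ≤ f y + f x`.
-/

namespace RTree

variable {V : Type*} (T : RTree V)

theorem iterate_parent_root (k : ℕ) : T.parent^[k] T.root = T.root :=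
  Function.iterate_fixed T.parent_root k

theorem depth_parent_eq_sub_one (v : V) : T.depth (T.parent v) = T.depth v - 1 := by
  by_cases hv : v = T.root
  · rw [hv, T.parent_root, T.depth_root]
  · have := T.depth_parent v hv; omega

theorem depth_iterate_parent (k : ℕ) (v : V) :
    T.depth (T.parent^[k] v) = T.depth v - k := by
  induction k with
  | zero => rfl
  | succ n ih => rw [Function.iterate_succ_apply', T.depth_parent_eq_sub_one, ih]; omega

theorem anc_refl (a : V) : T.anc a a := ⟨0, rfl⟩

theorem anc_parent (b : V) : T.anc (T.parent b) b := ⟨1, rfl⟩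

theorem depth_le_of_anc {a b : V} (h : T.anc a b) : T.depth a ≤ T.depth b := by
  obtain ⟨k, rfl⟩ := h
  rw [T.depth_iterate_parent]; omega

theorem anc_iff {a b : V} : T.anc a b ↔ T.parent^[T.depth b - T.depth a] b = a := by
  refine ⟨?_, fun h => ⟨_, h⟩⟩
  rintro ⟨k, rfl⟩
  rw [T.depth_iterate_parent]
  by_cases hk : k ≤ T.depth b
  · congr 1; omega
  · have hroot : T.parent^[k] b = T.root := by
      rw [← Nat.sub_add_cancel (le_of_not_ge hk), Function.iterate_add_apply, T.iterate_depth,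
        T.iterate_parent_root]
    rw [show T.depth b - (T.depth b - k) = T.depth b by omega, T.iterate_depth, hroot]

theorem lca_eq_of_anc_left {a b : V} (h : T.anc a b) : T.lca a b = a := by
  classical
  rw [lca, (Nat.find_eq_zero (T.exists_lcaIndex a b)).mpr h, Function.iterate_zero_apply]

theorem lca_eq_of_anc_right {a b : V} (h : T.anc a b) : T.lca b a = a := by
  classical
  have hb : T.parent^[T.depth b - T.depth a] b = a := T.anc_iff.mp h
  have hfind : Nat.find (T.exists_lcaIndex b a) = T.depth b - T.depth a := by
    refine (Nat.find_eq_iff _).mpr ⟨by rw [hb]; exact T.anc_refl a, fun j hj hanc => ?_⟩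
    have := T.depth_le_of_anc hanc
    rw [T.depth_iterate_parent] at this
    have := T.depth_le_of_anc h
    omega
  rw [lca, hfind, hb]

theorem dist_of_anc {a b : V} (h : T.anc a b) : T.dist a b = T.depth b - T.depth a := by
  rw [dist, T.lca_eq_of_anc_left h]; omega

theorem dist_comm_of_anc {a b : V} (h : T.anc a b) : T.dist b a = T.dist a b := by
  rw [dist, T.lca_eq_of_anc_right h, T.dist_of_anc h]; omega

theorem dist_self (a : V) : T.dist a a = 0 := by
  rw [T.dist_of_anc (T.anc_refl a), Nat.sub_self]

theorem anc_and_dist_le_one_iff {a b : V} :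
    T.anc a b ∧ T.dist a b ≤ 1 ↔ a = b ∨ a = T.parent b := by
  constructor
  · rintro ⟨h, hd⟩
    rw [T.dist_of_anc h] at hd
    have hb := T.anc_iff.mp h
    interval_cases hk : T.depth b - T.depth a
    · exact Or.inl hb.symm
    · exact Or.inr hb.symm
  · rintro (rfl | rfl)
    · exact ⟨T.anc_refl a, by rw [T.dist_self]; omega⟩
    · refine ⟨T.anc_parent b, ?_⟩
      rw [T.dist_of_anc (T.anc_parent b), T.depth_parent_eq_sub_one]; omega

theorem anc_and_dist_le_one_iff' {a b : V} :
    T.anc a b ∧ T.dist b a ≤ 1 ↔ a = b ∨ a = T.parent b := by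
  rw [← T.anc_and_dist_le_one_iff]
  exact and_congr_right fun h => by rw [T.dist_comm_of_anc h]

theorem pathVertex_of_dist_le {a b : V} {d : ℕ} (h : T.dist a b ≤ d) :
    T.pathVertex a b d = b := by
  rw [pathVertex, if_pos h]

theorem pathVertex_zero {a b : V} (h : T.dist a b ≠ 0) : T.pathVertex a b 0 = a := by
  rw [pathVertex, if_neg (by omega), if_pos (Nat.zero_le _), Function.iterate_zero_apply]

theorem cap_self (a : V) : T.cap a a = a := by
  simp only [cap, T.pathVertex_of_dist_le (T.dist_self a ▸ Nat.zero_le _), ite_self]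

theorem cup_self (a : V) : T.cup a a = a := by
  simp only [cup, T.pathVertex_of_dist_le (T.dist_self a ▸ Nat.zero_le _), ite_self]

open Classical in
theorem cap_of_dist_eq_one {a b : V} (h : T.dist a b = 1) :
    T.cap a b = if T.anc a b then a else b := by
  simp only [cap, h, T.pathVertex_zero (h ▸ one_ne_zero), T.pathVertex_of_dist_le h.le]

open Classical in
theorem cup_of_dist_eq_one {a b : V} (h : T.dist a b = 1) :
    T.cup a b = if T.anc a b then b else a := by
  simp only [cup, h, T.pathVertex_zero (h ▸ one_ne_zero), T.pathVertex_of_dist_le h.le]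

theorem dist_parent_left {b : V} (hb : b ≠ T.root) : T.dist (T.parent b) b = 1 := by
  rw [T.dist_of_anc (T.anc_parent b), T.depth_parent_eq_sub_one]
  have := T.depth_parent b hb
  omega

theorem dist_parent_right {b : V} (hb : b ≠ T.root) : T.dist b (T.parent b) = 1 := by
  rw [T.dist_comm_of_anc (T.anc_parent b), T.dist_parent_left hb]

theorem not_anc_parent {a : V} (ha : a ≠ T.root) : ¬ T.anc a (T.parent a) := fun h => by
  have := T.depth_le_of_anc h
  have := T.depth_parent a ha
  omega

theorem cap_parent_left (b : V) : T.cap (T.parent b) b = T.parent b := by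
  by_cases hb : b = T.root
  · rw [hb, T.parent_root, T.cap_self]
  · rw [T.cap_of_dist_eq_one (T.dist_parent_left hb), if_pos (T.anc_parent b)]

theorem cup_parent_left (b : V) : T.cup (T.parent b) b = b := by
  by_cases hb : b = T.root
  · rw [hb, T.parent_root, T.cup_self]
  · rw [T.cup_of_dist_eq_one (T.dist_parent_left hb), if_pos (T.anc_parent b)]

theorem cap_parent_right (a : V) : T.cap a (T.parent a) = T.parent a := by
  by_cases ha : a = T.root
  · rw [ha, T.parent_root, T.cap_self]
  · rw [T.cap_of_dist_eq_one (T.dist_parent_right ha), if_neg (T.not_anc_parent ha)]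

theorem cup_parent_right (a : V) : T.cup a (T.parent a) = a := by
  by_cases ha : a = T.root
  · rw [ha, T.parent_root, T.cup_self]
  · rw [T.cup_of_dist_eq_one (T.dist_parent_right ha), if_neg (T.not_anc_parent ha)]

theorem cap_eq_or_eq_parent {a b c : V} (ha : a = c ∨ a = T.parent c)
    (hb : b = c ∨ b = T.parent c) : T.cap a b = b ∨ T.cap a b = T.parent b := by
  rcases ha with rfl | rfl <;> rcases hb with rfl | rfl
  · exact Or.inl (T.cap_self _)
  · exact Or.inl (T.cap_parent_right a)
  · exact Or.inr (T.cap_parent_left b)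
  · exact Or.inl (T.cap_self _)

theorem eq_or_eq_parent_cup {a b c : V} (ha : a = c ∨ a = T.parent c)
    (hb : b = c ∨ b = T.parent c) : b = T.cup a b ∨ b = T.parent (T.cup a b) := by
  rcases ha with rfl | rfl <;> rcases hb with rfl | rfl
  · exact Or.inl (T.cup_self _).symm
  · exact Or.inr (by rw [T.cup_parent_right])
  · exact Or.inl (T.cup_parent_left b).symm
  · exact Or.inl (T.cup_self _).symm

end RTree

section Product

variable {ι : Type*} {V : ι → Type*} {T : ∀ i, RTree (V i)} {x y : ∀ i, V i}

theorem mem_inward_iff : y ∈ inward T x ↔ ∀ i, y i = x i ∨ y i = (T i).parent (x i) := by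
  rw [inward, Set.mem_ofPred_eq, ← forall_and]
  exact forall_congr' fun i => and_comm.trans (T i).anc_and_dist_le_one_iff'

theorem mem_outward_iff : y ∈ outward T x ↔ ∀ i, x i = y i ∨ x i = (T i).parent (y i) := by
  rw [outward, Set.mem_ofPred_eq, ← forall_and]
  exact forall_congr' fun i => and_comm.trans (T i).anc_and_dist_le_one_iff

end Product

theorem outward_step_preserves_inward_optimality_general {ι : Type*} {V : ι → Type*}
    (T : ∀ i, RTree (V i)) (f : (∀ i, V i) → ℝ)
    (hf : StronglyTreeSubmodular T f) (x x' : ∀ i, V i)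
    (hin : ∀ y ∈ inward T x, f x ≤ f y)
    (hx' : x' ∈ outward T x) (hmin : ∀ y ∈ outward T x, f x' ≤ f y) :
    ∀ y ∈ inward T x', f x' ≤ f y := by
  intro y hy
  rw [mem_inward_iff] at hy
  rw [mem_outward_iff] at hx'
  have hcap : (fun i => (T i).cap (y i) (x i)) ∈ inward T x :=
    mem_inward_iff.mpr fun i => (T i).cap_eq_or_eq_parent (hy i) (hx' i)
  have hcup : (fun i => (T i).cup (y i) (x i)) ∈ outward T x :=
    mem_outward_iff.mpr fun i => (T i).eq_or_eq_parent_cup (hy i) (hx' i)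
  linarith [hf y x, hin _ hcap, hmin _ hcup]

/-- Each outward steepest-descent step preserves inward local
optimality: if `f` is strongly tree-submodular, `x` minimizes `f` over `INWARD(x)`, and
`x'` is a minimizer of `f` over `OUTWARD(x)`, then `x'` minimizes `f` over `INWARD(x')`. -/
theorem outward_step_preserves_inward_optimality {ι : Type*} [Fintype ι] {V : ι → Type*}
    [∀ i, Fintype (V i)] (T : ∀ i, RTree (V i)) (f : (∀ i, V i) → ℝ)
    (hf : StronglyTreeSubmodular T f) (x x' : ∀ i, V i)
    (hin : ∀ y ∈ inward T x, f x ≤ f y)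
    (hx' : x' ∈ outward T x) (hmin : ∀ y ∈ outward T x, f x' ≤ f y) :
    ∀ y ∈ inward T x', f x' ≤ f y :=
  outward_step_preserves_inward_optimality_general T f hf x x' hin hx' hmin
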